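/- arXiv:1805.12250 — 2 statements merged into one kernel-verified Lean document; each statement's English description precedes it below -/
import Mathlib

section
/- Let G be a connected simple graph with n vertices and let X be a nonempty proper subset of V(G) with |X| = n₁ such that the subgraph induced by X is the complete graph K_{n₁}. Then S_L(G) ≥ n₁(n − 1 − Δ(G))/(n − n₁), where Δ(G) is the maximum degree of G. -/
open Finset Polynomial

/-- The number of edges of `G` with one endpoint in `X` and the other in `Xᶜ`
(each such edge corresponds to exactly one ordered pair in `X ×ˢ Xᶜ`). -/
def crossEdgeCard {n : ℕ} (G : SimpleGraph (Fin n)) [DecidableRel G.Adj]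
    (X : Finset (Fin n)) : ℕ :=
  ((X ×ˢ Xᶜ).filter (fun p => G.Adj p.1 p.2)).card

/-- The edge density `ρ_G(X) = n·|E_X(G)|/(|X|·|Xᶜ|)`. -/
noncomputable def edgeDensityR {n : ℕ} (G : SimpleGraph (Fin n)) [DecidableRel G.Adj]
    (X : Finset (Fin n)) : ℝ :=
  ((n : ℝ) * (crossEdgeCard G X : ℝ)) / ((X.card : ℝ) * ((Xᶜ : Finset (Fin n)).card : ℝ))

/-- `μ` is the (weakly decreasing) sequence of eigenvalues of the Laplacian matrix of `G`:
it is antitone and the characteristic polynomial of `L(G)` is `∏ i (x - μ i)`. -/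
def IsLapEigSeq {n : ℕ} (G : SimpleGraph (Fin n)) [DecidableRel G.Adj]
    (μ : Fin n → ℝ) : Prop :=
  (∀ i j : Fin n, i ≤ j → μ j ≤ μ i) ∧
    (G.lapMatrix ℝ).charpoly = ∏ i : Fin n, (X - C (μ i))

/-!
The largest Laplacian eigenvalue is at least `Δ + 1`: for a vertex `v` of degree `d > 0` and the
unit vector `e_v`, `‖L e_v‖² = d² + d` while `‖L e_v‖² ≤ μ₁ ⟪e_v, L e_v⟫ = μ₁ d`, because
`L² ≤ μ₁ L` for `0 ≤ L ≤ μ₁`. On the other hand `μ_{n-1}` is the minimum of the Rayleigh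
quotient over vectors orthogonal to the kernel of `L`, which for a connected graph consists of
the constants. Testing it on the vector equal to `|Xᶜ|` on `X` and `-|X|` on `Xᶜ` gives
`μ_{n-1} ≤ ρ_G(X)`, and `ρ_G(X) ≤ n (Δ + 1 - n₁) / (n - n₁)` because every vertex of the
clique `X` has at most `Δ + 1 - n₁` neighbours outside `X`.
-/

open scoped RealInnerProductSpace

lemma Finset.sum_ite_mem_const {ι : Type*} [Fintype ι] [DecidableEq ι] (s : Finset ι) (a b : ℝ) :
    ∑ i, (if i ∈ s then a else b) = #s * a + #sᶜ * b := by
  rw [← sum_add_sum_compl s, sum_congr rfl fun i hi => if_pos hi,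
    sum_congr rfl fun i hi => if_neg (mem_compl.mp hi)]
  simp

lemma Finset.card_compl_pos {ι : Type*} [Fintype ι] [DecidableEq ι] {s : Finset ι}
    (hs : s ≠ univ) : 0 < #sᶜ :=
  card_pos.mpr (nonempty_iff_ne_empty.mpr ((compl_eq_empty_iff s).not.mpr hs))

lemma Finset.cast_card_add_card_compl_fin {n : ℕ} (s : Finset (Fin n)) :
    (#s : ℝ) + #sᶜ = n := by
  rw [← Nat.cast_add, card_add_card_compl, Fintype.card_fin]

namespace LinearMap.IsSymmetric

variable {E : Type*} [NormedAddCommGroup E] [InnerProductSpace ℝ E] [FiniteDimensional ℝ E]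
  {T : E →ₗ[ℝ] E} (hT : T.IsSymmetric) {n : ℕ} (hn : Module.finrank ℝ E = n)

lemma eigenvalues_eq_of_charpoly_eq {μ : Fin n → ℝ} (hμ : Antitone μ)
    (hchar : T.charpoly = ∏ i, (X - C (μ i))) : hT.eigenvalues hn = μ := by
  have hroots : T.charpoly.roots = univ.val.map μ := by
    rw [hchar, roots_prod _ _ (prod_ne_zero_iff.mpr fun i _ => X_sub_C_ne_zero (μ i))]
    simp
  rw [← List.ofFn_inj, ← hT.sort_roots_charpoly_eq_eigenvalues hn, hroots, Fin.univ_val_map]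
  simp only [Multiset.map_coe, List.map_ofFn, Multiset.coe_sort]
  apply List.mergeSort_of_pairwise
  simpa [List.pairwise_ofFn] using fun i j (hij : i < j) => hμ hij.le

lemma inner_eigenvectorBasis_apply (i : Fin n) (x : E) :
    ⟪hT.eigenvectorBasis hn i, T x⟫ = hT.eigenvalues hn i * ⟪hT.eigenvectorBasis hn i, x⟫ := by
  rw [← hT, hT.apply_eigenvectorBasis, real_inner_smul_left]
  rfl

lemma inner_apply_self_eq_sum (x : E) :
    ⟪x, T x⟫ = ∑ i, hT.eigenvalues hn i * ⟪hT.eigenvectorBasis hn i, x⟫ ^ 2 := by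
  rw [← (hT.eigenvectorBasis hn).sum_inner_mul_inner]
  simp only [hT.inner_eigenvectorBasis_apply, real_inner_comm x]
  congr! 1 with i
  ring

lemma norm_apply_sq_eq_sum (x : E) :
    ‖T x‖ ^ 2 = ∑ i, hT.eigenvalues hn i ^ 2 * ⟪hT.eigenvectorBasis hn i, x⟫ ^ 2 := by
  simp only [← (hT.eigenvectorBasis hn).sum_sq_inner_right, hT.inner_eigenvectorBasis_apply,
    mul_pow]

lemma eigenvalues_mul_norm_sq_le_inner_apply_self (k : Fin n) (x : E)
    (hx : ∀ j, k < j → ⟪hT.eigenvectorBasis hn j, x⟫ = 0) :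
    hT.eigenvalues hn k * ‖x‖ ^ 2 ≤ ⟪x, T x⟫ := by
  rw [hT.inner_apply_self_eq_sum hn, ← (hT.eigenvectorBasis hn).sum_sq_inner_right, mul_sum]
  refine sum_le_sum fun j _ => ?_
  rcases le_or_gt j k with hjk | hkj
  · exact mul_le_mul_of_nonneg_right (hT.eigenvalues_antitone hn hjk) (sq_nonneg _)
  · simp [hx j hkj]

end LinearMap.IsSymmetric

namespace LinearMap.IsPositive

variable {E : Type*} [NormedAddCommGroup E] [InnerProductSpace ℝ E] [FiniteDimensional ℝ E]
  {T : E →ₗ[ℝ] E} (hT : T.IsPositive) {n : ℕ} (hn : Module.finrank ℝ E = n)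

lemma norm_apply_sq_le (i : Fin n)
    (hi : ∀ j, hT.isSymmetric.eigenvalues hn j ≤ hT.isSymmetric.eigenvalues hn i) (x : E) :
    ‖T x‖ ^ 2 ≤ hT.isSymmetric.eigenvalues hn i * ⟪x, T x⟫ := by
  rw [hT.isSymmetric.norm_apply_sq_eq_sum hn, hT.isSymmetric.inner_apply_self_eq_sum hn, mul_sum]
  refine sum_le_sum fun j _ => ?_
  rw [sq, ← mul_assoc]
  gcongr
  · exact hT.nonneg_eigenvalues hn j
  · exact hi j

lemma eigenvalues_eq_zero_of_apply_eq_zero {v : E} (hv₀ : v ≠ 0) (hv : T v = 0) (i : Fin n)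
    (hi : ∀ j, j ≤ i) : hT.isSymmetric.eigenvalues hn i = 0 := by
  obtain ⟨j, hj⟩ := hT.isSymmetric.exists_eigenvalues_eq hn (μ := 0)
    (Module.End.hasEigenvalue_of_hasEigenvector ⟨by simpa using hv, hv₀⟩)
  exact le_antisymm (hj ▸ hT.isSymmetric.eigenvalues_antitone hn (hi j))
    (hT.nonneg_eigenvalues hn i)

end LinearMap.IsPositive

namespace SimpleGraph

section Laplacian

variable {V : Type*} [Fintype V] [DecidableEq V] (G : SimpleGraph V) [DecidableRel G.Adj]

lemma isPositive_toEuclideanLin_lapMatrix : (G.lapMatrix ℝ).toEuclideanLin.IsPositive :=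
  Matrix.isPositive_toEuclideanLin_iff.mpr (G.posSemidef_lapMatrix ℝ)

lemma inner_toEuclideanLin_lapMatrix (x : EuclideanSpace ℝ V) :
    ⟪x, (G.lapMatrix ℝ).toEuclideanLin x⟫ =
      (∑ i, ∑ j, if G.Adj i j then (x i - x j) ^ 2 else 0) / 2 := by
  rw [EuclideanSpace.inner_eq_star_dotProduct, Matrix.ofLp_toLpLin, dotProduct_comm,
    Matrix.toLin'_apply, star_trivial, ← Matrix.toLinearMap₂'_apply']
  exact G.lapMatrix_toLinearMap₂' ℝ x.ofLp

lemma inner_single_toEuclideanLin_lapMatrix (v : V) :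
    ⟪EuclideanSpace.single v 1, (G.lapMatrix ℝ).toEuclideanLin (EuclideanSpace.single v 1)⟫ =
      G.degree v := by
  simp [EuclideanSpace.inner_single_left, Matrix.mulVec_single, lapMatrix, degMatrix]

lemma sum_lapMatrix_apply_sq (v : V) :
    ∑ u, G.lapMatrix ℝ u v ^ 2 = (G.degree v : ℝ) ^ 2 + G.degree v := by
  have hsq : ∑ u, G.lapMatrix ℝ u v ^ 2 = (G.lapMatrix ℝ * G.lapMatrix ℝ) v v := by
    rw [Matrix.mul_apply]
    congr! 1 with u
    rw [sq, ← (G.isSymm_lapMatrix ℝ).apply v u]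
  rw [hsq, lapMatrix, degMatrix, Matrix.sub_mul, Matrix.mul_sub, Matrix.mul_sub]
  simp [sq, Matrix.diagonal_apply,
    filter_true_of_mem fun u hu => (G.mem_neighborFinset v u).mp hu]

lemma norm_toEuclideanLin_lapMatrix_single_sq (v : V) :
    ‖(G.lapMatrix ℝ).toEuclideanLin (EuclideanSpace.single v 1)‖ ^ 2 =
      (G.degree v : ℝ) ^ 2 + G.degree v := by
  rw [EuclideanSpace.norm_sq_eq]
  simp [Matrix.mulVec_single, sum_lapMatrix_apply_sq]

variable {G}

lemma Connected.inner_eq_zero_of_toEuclideanLin_lapMatrix_eq_zero (hG : G.Connected)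
    {w : EuclideanSpace ℝ V} (hw : (G.lapMatrix ℝ).toEuclideanLin w = 0)
    {x : EuclideanSpace ℝ V} (hx : ∑ i, x i = 0) : ⟪w, x⟫ = 0 := by
  obtain ⟨v⟩ := hG.nonempty
  have hconst : ∀ i, w i = w v := by
    have hker : (G.lapMatrix ℝ).mulVec w.ofLp = 0 := by simpa using congrArg WithLp.ofLp hw
    exact fun i => G.lapMatrix_mulVec_eq_zero_iff_forall_reachable.mp hker i v (hG.preconnected i v)
  simp [PiLp.inner_apply, hconst, ← sum_mul, hx]

lemma IsClique.card_neighborFinset_sdiff_add_card_le {X : Finset V} (hX : G.IsClique (X : Set V))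
    {u : V} (hu : u ∈ X) : #(G.neighborFinset u \ X) + #X ≤ G.maxDegree + 1 := by
  have hsub : (G.neighborFinset u \ X) ∪ X.erase u ⊆ G.neighborFinset u := by
    refine union_subset sdiff_subset fun v hv => ?_
    rw [mem_erase] at hv
    exact (G.mem_neighborFinset u v).mpr (hX hu hv.2 (Ne.symm hv.1))
  have hcard := card_le_card hsub
  rw [card_union_of_disjoint (disjoint_sdiff_self_left.mono_right (erase_subset u X)),
    card_neighborFinset_eq_degree] at hcard
  have := G.degree_le_maxDegree u
  have := card_erase_add_one hu
  omega

end Laplacian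

end SimpleGraph

section CrossEdges

variable {n : ℕ} (G : SimpleGraph (Fin n)) [DecidableRel G.Adj] (X : Finset (Fin n))

lemma crossEdgeCard_eq_sum_card_neighborFinset_sdiff :
    crossEdgeCard G X = ∑ u ∈ X, #(G.neighborFinset u \ X) := by
  rw [crossEdgeCard, card_filter, sum_product]
  refine sum_congr rfl fun u _ => ?_
  rw [← card_filter]
  congr 1
  ext v
  simp [and_comm]

lemma sum_sum_adj_sq_sub_ite_mem (a b : ℝ) :
    (∑ i, ∑ j, if G.Adj i j then
      ((if i ∈ X then a else b) - (if j ∈ X then a else b)) ^ 2 else 0) =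
      2 * (a - b) ^ 2 * crossEdgeCard G X := by
  have hcut : (crossEdgeCard G X : ℝ) =
      ∑ i, ∑ j, if i ∈ X ∧ j ∉ X ∧ G.Adj i j then 1 else 0 := by
    rw [crossEdgeCard, card_filter, sum_product]
    push_cast
    simp [ite_and, ← mem_compl, sum_ite_mem]
  have hterm : ∀ i j, (if G.Adj i j then
      ((if i ∈ X then a else b) - (if j ∈ X then a else b)) ^ 2 else 0) =
      (a - b) ^ 2 * ((if i ∈ X ∧ j ∉ X ∧ G.Adj i j then 1 else 0) +
        (if j ∈ X ∧ i ∉ X ∧ G.Adj j i then 1 else 0)) := by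
    intro i j
    by_cases hi : i ∈ X <;> by_cases hj : j ∈ X <;> by_cases hij : G.Adj i j <;>
      simp [hi, hj, hij, G.adj_comm j i, sub_sq_comm b a]
  simp only [hterm, ← mul_sum, sum_add_distrib]
  rw [sum_comm (f := fun i j => if j ∈ X ∧ i ∉ X ∧ G.Adj j i then (1 : ℝ) else 0), ← hcut]
  ring

variable {G X}

lemma crossEdgeCard_add_card_mul_card_le (hX : G.IsClique (X : Set (Fin n))) :
    crossEdgeCard G X + #X * #X ≤ #X * (G.maxDegree + 1) := by
  rw [crossEdgeCard_eq_sum_card_neighborFinset_sdiff, mul_comm, ← smul_eq_mul, ← sum_const,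
    ← smul_eq_mul, ← sum_const, ← sum_add_distrib]
  exact sum_le_sum fun u hu => hX.card_neighborFinset_sdiff_add_card_le hu

lemma edgeDensityR_le_of_isClique (hX : G.IsClique (X : Set (Fin n))) (hne : X.Nonempty)
    (hXp : X ≠ univ) :
    edgeDensityR G X ≤ n * (G.maxDegree + 1 - #X) / (n - #X) := by
  have hcompl : (#Xᶜ : ℝ) = n - #X := eq_sub_of_add_eq' (cast_card_add_card_compl_fin X)
  have hkc : (0 : ℝ) < n - #X := hcompl ▸ by exact_mod_cast card_compl_pos hXp
  have hcut : (crossEdgeCard G X : ℝ) ≤ #X * (G.maxDegree + 1 - #X) := by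
    have : (crossEdgeCard G X : ℝ) + #X * #X ≤ #X * (G.maxDegree + 1) := by
      exact_mod_cast crossEdgeCard_add_card_mul_card_le hX
    linarith
  calc edgeDensityR G X
      ≤ n * (#X * (G.maxDegree + 1 - #X)) / (#X * (n - #X)) := by
        rw [edgeDensityR, hcompl]
        gcongr
    _ = n * (G.maxDegree + 1 - #X) / (n - #X) := by
        field_simp

end CrossEdges

namespace IsLapEigSeq

open SimpleGraph

variable {n : ℕ} {G : SimpleGraph (Fin n)} [DecidableRel G.Adj] {μ : Fin n → ℝ}

lemma eigenvalues_eq (hμ : IsLapEigSeq G μ) :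
    G.isPositive_toEuclideanLin_lapMatrix.isSymmetric.eigenvalues finrank_euclideanSpace_fin = μ :=
  G.isPositive_toEuclideanLin_lapMatrix.isSymmetric.eigenvalues_eq_of_charpoly_eq _ hμ.1 <| by
    rw [Matrix.toEuclideanLin_eq_toLin_orthonormal, Matrix.charpoly_toLin]
    exact hμ.2

lemma degree_add_one_le (hμ : IsLapEigSeq G μ) (v : Fin n) (hv : 0 < G.degree v) :
    (G.degree v : ℝ) + 1 ≤ μ ⟨0, v.pos⟩ := by
  have hT := G.isPositive_toEuclideanLin_lapMatrix
  have key := hT.norm_apply_sq_le finrank_euclideanSpace_fin ⟨0, v.pos⟩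
    (fun j => hT.isSymmetric.eigenvalues_antitone _ (Fin.le_def.mpr j.val.zero_le))
    (EuclideanSpace.single v 1)
  rw [hμ.eigenvalues_eq, norm_toEuclideanLin_lapMatrix_single_sq,
    inner_single_toEuclideanLin_lapMatrix] at key
  have hd : (0 : ℝ) < G.degree v := by exact_mod_cast hv
  exact le_of_mul_le_mul_right (by linarith) hd

lemma mul_norm_sq_le_inner_toEuclideanLin_lapMatrix (hμ : IsLapEigSeq G μ) (hG : G.Connected)
    (hn : 2 ≤ n) (x : EuclideanSpace ℝ (Fin n)) (hx : ∑ i, x i = 0) :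
    μ ⟨n - 2, by omega⟩ * ‖x‖ ^ 2 ≤ ⟪x, (G.lapMatrix ℝ).toEuclideanLin x⟫ := by
  have hT := G.isPositive_toEuclideanLin_lapMatrix
  set b := hT.isSymmetric.eigenvectorBasis finrank_euclideanSpace_fin
  let last : Fin n := ⟨n - 1, by omega⟩
  have hlast : hT.isSymmetric.eigenvalues finrank_euclideanSpace_fin last = 0 := by
    refine hT.eigenvalues_eq_zero_of_apply_eq_zero _ (v := WithLp.toLp 2 fun _ => 1) ?_ ?_ last
      fun j => Fin.le_def.mpr (by simp [last]; omega)
    · exact fun h => one_ne_zero (congrFun (congrArg WithLp.ofLp h) last)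
    · simp [G.lapMatrix_mulVec_const_eq_zero]
  have hker : (G.lapMatrix ℝ).toEuclideanLin (b last) = 0 := by
    rw [hT.isSymmetric.apply_eigenvectorBasis, hlast]
    simp
  rw [← hμ.eigenvalues_eq]
  refine hT.isSymmetric.eigenvalues_mul_norm_sq_le_inner_apply_self _ _ x fun j hj => ?_
  obtain rfl : j = last := Fin.ext (by simp [last, Fin.lt_def] at hj ⊢; omega)
  exact hG.inner_eq_zero_of_toEuclideanLin_lapMatrix_eq_zero hker hx

lemma le_edgeDensityR (hμ : IsLapEigSeq G μ) (hG : G.Connected) (hn : 2 ≤ n)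
    {X : Finset (Fin n)} (hne : X.Nonempty) (hXp : X ≠ univ) :
    μ ⟨n - 2, by omega⟩ ≤ edgeDensityR G X := by
  have hcard := cast_card_add_card_compl_fin X
  let x : EuclideanSpace ℝ (Fin n) := WithLp.toLp 2 fun i => if i ∈ X then (#Xᶜ : ℝ) else -#X
  have hsum : ∑ i, x i = 0 := by
    simp only [x, sum_ite_mem_const]
    ring
  have hnorm : ‖x‖ ^ 2 = #X * #Xᶜ * n := by
    rw [EuclideanSpace.norm_sq_eq, ← hcard]
    simp only [x, Real.norm_eq_abs, sq_abs, apply_ite (· ^ 2), sum_ite_mem_const]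
    ring
  have hquad : ⟪x, (G.lapMatrix ℝ).toEuclideanLin x⟫ = n ^ 2 * crossEdgeCard G X := by
    rw [inner_toEuclideanLin_lapMatrix, ← hcard]
    simp only [x, sum_sum_adj_sq_sub_ite_mem]
    ring
  have key := hμ.mul_norm_sq_le_inner_toEuclideanLin_lapMatrix hG hn x hsum
  rw [hnorm, hquad] at key
  have hk : (0 : ℝ) < #X := by exact_mod_cast hne.card_pos
  have hkc : (0 : ℝ) < #Xᶜ := by exact_mod_cast card_compl_pos hXp
  rw [edgeDensityR, le_div_iff₀ (by positivity)]
  exact le_of_mul_le_mul_right (by linarith) (by linarith : (0 : ℝ) < n)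

end IsLapEigSeq

/-- if the subgraph induced by a nonempty proper subset `X` with `|X| = n₁`
is complete, then `S_L(G) ≥ n₁(n - 1 - Δ(G))/(n - n₁)`. -/
theorem laplacianSpread_ge_of_inducedComplete
    {n : ℕ} (hn : 2 ≤ n) (G : SimpleGraph (Fin n)) [DecidableRel G.Adj]
    (hG : G.Connected)
    (μ : Fin n → ℝ) (hμ : IsLapEigSeq G μ)
    (X : Finset (Fin n)) (hX : X.Nonempty) (hXp : X ≠ univ)
    (hXcomplete : ∀ u ∈ X, ∀ v ∈ X, u ≠ v → G.Adj u v)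
    (n₁ : ℕ) (hn₁ : X.card = n₁) :
    (n₁ : ℝ) * ((n : ℝ) - 1 - (G.maxDegree : ℝ)) / ((n : ℝ) - (n₁ : ℝ))
      ≤ μ ⟨0, by omega⟩ - μ ⟨n - 2, by omega⟩ := by
  subst hn₁
  have : Nontrivial (Fin n) := Fin.nontrivial_iff_two_le.mpr hn
  obtain ⟨v, hv⟩ := G.exists_maximal_degree_vertex
  have hΔ : (G.maxDegree : ℝ) + 1 ≤ μ ⟨0, by omega⟩ :=
    hv ▸ hμ.degree_add_one_le v (hG.preconnected.degree_pos_of_nontrivial v)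
  have hρ : μ ⟨n - 2, by omega⟩ ≤ n * (G.maxDegree + 1 - #X) / (n - #X) :=
    (hμ.le_edgeDensityR hG hn hX hXp).trans (edgeDensityR_le_of_isClique hXcomplete hX hXp)
  have hkc : (n : ℝ) - #X ≠ 0 := by
    rw [← eq_sub_of_add_eq' (cast_card_add_card_compl_fin X)]
    exact_mod_cast (card_compl_pos hXp).ne'
  have hsplit : (#X : ℝ) * (n - 1 - G.maxDegree) / (n - #X) =
      G.maxDegree + 1 - n * (G.maxDegree + 1 - #X) / (n - #X) := by
    field_simp
    ring
  linarith
end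

section
/- Let G be a connected simple graph with n vertices whose set T of pendant vertices (vertices of degree one) is nonempty, is a proper subset of V(G), and has cardinality n₁. Then S_L(G) ≥ n₁/(n − n₁). -/
/-!
The largest Laplacian eigenvalue `μ₁` bounds every Rayleigh quotient `xᵀLx / xᵀx` from
above. For a connected graph the eigenvalue `0` is simple with constant eigenvectors, so the
second smallest eigenvalue `μ_{n-1}` bounds from below the Rayleigh quotient of every vector with
coordinate sum `0`.

If `G` has a vertex that is not pendant, no two pendant vertices are adjacent, so each of the
`n₁` pendant vertices has its own edge into `Tᶜ`. The vector equal to `n - n₁` on `T` and to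
`-n₁` off `T` then gives `μ₁ ≥ ρ(T) ≥ n / (n - n₁)`. If `v` is pendant with neighbour `u`, the
vector equal to `n - 2` at `v`, `0` at `u` and `-1` elsewhere gives `μ_{n-1} ≤ 1`. Hence
`S_L(G) ≥ n / (n - n₁) - 1 = n₁ / (n - n₁)`.
-/

open Finset Polynomial

open Matrix

namespace Matrix.IsHermitian

variable {ι : Type*} [Fintype ι] [DecidableEq ι] {A : Matrix ι ι ℝ} (hA : A.IsHermitian)

lemma dotProduct_self_eq_sum_sq (x : ι → ℝ) :
    x ⬝ᵥ x = ∑ i, (⇑(hA.eigenvectorBasis i) ⬝ᵥ x) ^ 2 := by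
  have := hA.eigenvectorBasis.sum_inner_mul_inner (WithLp.toLp 2 x) (WithLp.toLp 2 x)
  simp only [EuclideanSpace.inner_eq_star_dotProduct, star_trivial] at this
  simp only [sq, ← this, dotProduct_comm x]

lemma eigenvectorBasis_dotProduct_mulVec (i : ι) (x : ι → ℝ) :
    ⇑(hA.eigenvectorBasis i) ⬝ᵥ A *ᵥ x =
      hA.eigenvalues i * (⇑(hA.eigenvectorBasis i) ⬝ᵥ x) := by
  have hAt : Aᵀ = A := by simpa [conjTranspose_eq_transpose_of_trivial] using hA.eq
  rw [dotProduct_mulVec, ← mulVec_transpose, hAt, mulVec_eigenvectorBasis, smul_dotProduct,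
    smul_eq_mul]

lemma dotProduct_mulVec_eq_sum_eigenvalues (x : ι → ℝ) :
    x ⬝ᵥ A *ᵥ x = ∑ i, hA.eigenvalues i * (⇑(hA.eigenvectorBasis i) ⬝ᵥ x) ^ 2 := by
  have := hA.eigenvectorBasis.sum_inner_mul_inner (WithLp.toLp 2 x) (WithLp.toLp 2 (A *ᵥ x))
  simp only [EuclideanSpace.inner_eq_star_dotProduct, star_trivial] at this
  rw [dotProduct_comm, ← this]
  refine sum_congr rfl fun i _ => ?_
  rw [dotProduct_comm (A *ᵥ x), eigenvectorBasis_dotProduct_mulVec]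
  ring

lemma dotProduct_mulVec_le_of_eigenvalues_le {c : ℝ} (hc : ∀ i, hA.eigenvalues i ≤ c)
    (x : ι → ℝ) : x ⬝ᵥ A *ᵥ x ≤ c * (x ⬝ᵥ x) := by
  rw [hA.dotProduct_mulVec_eq_sum_eigenvalues, hA.dotProduct_self_eq_sum_sq, mul_sum]
  gcongr with i
  exact hc i

lemma le_dotProduct_mulVec_of_le_eigenvalues {c : ℝ} {i₀ : ι}
    (hc : ∀ i ≠ i₀, c ≤ hA.eigenvalues i) {x : ι → ℝ}
    (hx : ⇑(hA.eigenvectorBasis i₀) ⬝ᵥ x = 0) : c * (x ⬝ᵥ x) ≤ x ⬝ᵥ A *ᵥ x := by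
  rw [hA.dotProduct_mulVec_eq_sum_eigenvalues, hA.dotProduct_self_eq_sum_sq, mul_sum]
  refine sum_le_sum fun i _ => ?_
  obtain rfl | hi := eq_or_ne i i₀
  · simp [hx]
  · gcongr
    exact hc i hi

lemma range_eigenvalues_of_charpoly_eq_prod {μ : ι → ℝ}
    (h : A.charpoly = ∏ i, (X - C (μ i))) : Set.range hA.eigenvalues = Set.range μ := by
  have mem_range_iff (f : ι → ℝ) (x : ℝ) :
      x ∈ Set.range f ↔ (∏ i, (X - C (f i))).IsRoot x := by
    simp only [Set.mem_range, IsRoot.def, eval_prod, eval_sub, eval_X, eval_C,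
      prod_eq_zero_iff, mem_univ, true_and, sub_eq_zero]
    exact exists_congr fun _ => eq_comm
  ext x
  rw [mem_range_iff, mem_range_iff, ← h, hA.charpoly_eq]
  simp

end Matrix.IsHermitian

lemma dotProduct_self_ite_mem {V : Type*} [Fintype V] [DecidableEq V] (X : Finset V)
    (a b : ℝ) :
    (fun v => if v ∈ X then a else b) ⬝ᵥ (fun v => if v ∈ X then a else b) =
      #X * a ^ 2 + #Xᶜ * b ^ 2 := by
  rw [dotProduct, ← sum_add_sum_compl X]
  congr 1
  · rw [sum_congr rfl fun v hv => (by rw [if_pos hv, ← sq] : _ = a ^ 2), sum_const,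
      nsmul_eq_mul]
  · rw [sum_congr rfl fun v hv => (by rw [if_neg (mem_compl.mp hv), ← sq] : _ = b ^ 2),
      sum_const, nsmul_eq_mul]

namespace SimpleGraph

variable {V : Type*} [Fintype V] {G : SimpleGraph V} [DecidableRel G.Adj]

lemma three_le_card_of_adj_of_degree_ne_one {u v : V} (huv : G.Adj u v)
    (hv : G.degree v ≠ 1) : 3 ≤ Fintype.card V := by
  have := G.degree_lt_card_verts v
  have := (G.degree_pos_iff_exists_adj v).mpr ⟨u, huv.symm⟩
  omega

/-- Two adjacent pendant vertices form a connected component. -/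
lemma Connected.degree_ne_one_of_adj (hG : G.Connected) {u v w : V} (hw : G.degree w ≠ 1)
    (hv : G.degree v = 1) (hvu : G.Adj v u) : G.degree u ≠ 1 := by
  intro hu
  have closed (a b : V) (hab : G.Adj a b) (ha : a = v ∨ a = u) : b = v ∨ b = u := by
    rcases ha with rfl | rfl
    · exact .inr ((degree_eq_one_iff_existsUnique_adj.mp hv).unique hab hvu)
    · exact .inl ((degree_eq_one_iff_existsUnique_adj.mp hu).unique hab hvu.symm)
  have reach (a b : V) (p : G.Walk a b) : a = v ∨ a = u → b = v ∨ b = u := by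
    induction p with
    | nil => exact id
    | cons hab _ ih => exact fun ha => ih (closed _ _ hab ha)
  obtain ⟨p⟩ := hG.preconnected v w
  rcases reach v w p (.inl rfl) with rfl | rfl <;> contradiction

variable [DecidableEq V]

lemma Connected.card_filter_lapMatrix_eigenvalues_eq_zero (hG : G.Connected) :
    #{i | (G.isHermitian_lapMatrix ℝ).eigenvalues i = 0} = 1 := by
  have hcomp : Fintype.card G.ConnectedComponent = 1 := by
    have : Unique G.ConnectedComponent := @Unique.mk' _
      ⟨G.connectedComponentMk hG.nonempty.some⟩ hG.preconnected.subsingleton_connectedComponent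
    exact Fintype.card_unique
  have hrank := (G.lapMatrix ℝ).mulVecLin.finrank_range_add_finrank_ker
  rw [← toLin'_apply', ← card_connectedComponent_eq_finrank_ker_toLin'_lapMatrix, hcomp,
    toLin'_apply', ← Matrix.rank, (G.isHermitian_lapMatrix ℝ).rank_eq_card_non_zero_eigs,
    Fintype.card_subtype, Module.finrank_fintype_fun_eq_card] at hrank
  simp only [ne_eq] at hrank
  have := card_filter_add_card_filter_not (s := univ)
    (fun i => (G.isHermitian_lapMatrix ℝ).eigenvalues i = 0)
  rw [card_univ] at this
  omega

lemma Connected.eigenvectorBasis_lapMatrix_apply_eq (hG : G.Connected) {i : V}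
    (hi : (G.isHermitian_lapMatrix ℝ).eigenvalues i = 0) (u v : V) :
    (G.isHermitian_lapMatrix ℝ).eigenvectorBasis i u =
      (G.isHermitian_lapMatrix ℝ).eigenvectorBasis i v := by
  have hker : G.lapMatrix ℝ *ᵥ ⇑((G.isHermitian_lapMatrix ℝ).eigenvectorBasis i) = 0 := by
    rw [IsHermitian.mulVec_eigenvectorBasis, hi, zero_smul]
  exact G.lapMatrix_mulVec_eq_zero_iff_forall_reachable.mp hker u v (hG.preconnected u v)

variable (G)

lemma dotProduct_lapMatrix_mulVec_eq_sum (x : V → ℝ) :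
    x ⬝ᵥ G.lapMatrix ℝ *ᵥ x = (∑ i, ∑ j, if G.Adj i j then (x i - x j) ^ 2 else 0) / 2 := by
  simpa only [toLinearMap₂'_apply'] using G.lapMatrix_toLinearMap₂' ℝ x

lemma dotProduct_lapMatrix_mulVec_sub_const (x : V → ℝ) (c : ℝ) :
    (x - fun _ => c) ⬝ᵥ G.lapMatrix ℝ *ᵥ (x - fun _ => c) = x ⬝ᵥ G.lapMatrix ℝ *ᵥ x := by
  simp only [dotProduct_lapMatrix_mulVec_eq_sum, Pi.sub_apply, sub_sub_sub_cancel_right]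

lemma dotProduct_lapMatrix_mulVec_smul_single_add {u v : V} (huv : G.Adj v u) (a b : ℝ) :
    (a • Pi.single v 1 + b • Pi.single u 1) ⬝ᵥ
        G.lapMatrix ℝ *ᵥ (a • Pi.single v 1 + b • Pi.single u 1) =
      a ^ 2 * G.degree v - 2 * a * b + b ^ 2 * G.degree u := by
  simp only [lapMatrix, degMatrix, mulVec_add, mulVec_smul, mulVec_single,
    MulOpposite.op_one, one_smul, dotProduct_add, dotProduct_smul, add_dotProduct,
    smul_dotProduct, single_dotProduct, col_apply, Matrix.sub_apply, diagonal_apply_eq,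
    adjMatrix_apply, SimpleGraph.irrefl,
    ↓reduceIte, sub_zero, one_mul, smul_eq_mul, ne_eq, huv.ne', not_false_eq_true,
    diagonal_apply_ne, huv.symm, zero_sub, mul_neg, mul_one, huv.ne, huv]
  ring

end SimpleGraph

section crossEdgeCard

variable {n : ℕ} (G : SimpleGraph (Fin n)) [DecidableRel G.Adj]

lemma crossEdgeCard_eq_sum (X : Finset (Fin n)) :
    (crossEdgeCard G X : ℝ) = ∑ i ∈ X, ∑ j ∈ Xᶜ, if G.Adj i j then 1 else 0 := by
  rw [crossEdgeCard, card_filter, sum_product]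
  push_cast
  rfl

lemma card_le_crossEdgeCard {X : Finset (Fin n)} (hX : ∀ v ∈ X, ∃ u ∉ X, G.Adj v u) :
    #X ≤ crossEdgeCard G X := by
  choose! f hfX hfadj using hX
  refine card_le_card_of_injOn (fun v => (v, f v)) (fun v hv => ?_)
    (fun v _ w _ h => congrArg Prod.fst h)
  simp only [mem_coe] at hv
  simp [hv, hfX v hv, hfadj v hv]

lemma dotProduct_lapMatrix_mulVec_ite_mem (X : Finset (Fin n)) (a b : ℝ) :
    (fun v => if v ∈ X then a else b) ⬝ᵥ
        G.lapMatrix ℝ *ᵥ (fun v => if v ∈ X then a else b) =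
      (a - b) ^ 2 * crossEdgeCard G X := by
  set x : Fin n → ℝ := fun v => if v ∈ X then a else b
  have block (s t : Finset (Fin n)) (c : ℝ) (h : ∀ i ∈ s, ∀ j ∈ t, (x i - x j) ^ 2 = c) :
      (∑ i ∈ s, ∑ j ∈ t, if G.Adj i j then (x i - x j) ^ 2 else 0) =
        c * ∑ i ∈ s, ∑ j ∈ t, if G.Adj i j then 1 else 0 := by
    simp_rw [mul_sum, mul_ite, mul_one, mul_zero]
    exact sum_congr rfl fun i hi => sum_congr rfl fun j hj => by rw [h i hi j hj]
  have hswap : (∑ i ∈ Xᶜ, ∑ j ∈ X, if G.Adj i j then (1 : ℝ) else 0) =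
      ∑ i ∈ X, ∑ j ∈ Xᶜ, if G.Adj i j then 1 else 0 := by
    rw [sum_comm]
    simp_rw [G.adj_comm]
  have hXX := block X X 0 fun i hi j hj => by simp [x, hi, hj]
  have hXXc := block X Xᶜ ((a - b) ^ 2) fun i hi j hj => by simp [x, hi, mem_compl.mp hj]
  have hXcX := block Xᶜ X ((a - b) ^ 2) fun i hi j hj => by
    simp [x, mem_compl.mp hi, hj, sub_sq_comm b a]
  have hXcXc := block Xᶜ Xᶜ 0 fun i hi j hj => by simp [x, mem_compl.mp hi, mem_compl.mp hj]
  rw [G.dotProduct_lapMatrix_mulVec_eq_sum, crossEdgeCard_eq_sum]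
  simp only [← sum_add_sum_compl X, sum_add_distrib]
  rw [hXX, hXXc, hXcX, hXcXc, hswap]
  ring

lemma div_card_compl_le_edgeDensityR {X : Finset (Fin n)} (hX : X.Nonempty)
    (hXc : Xᶜ.Nonempty) (hcross : ∀ v ∈ X, ∃ u ∉ X, G.Adj v u) :
    (n : ℝ) / #Xᶜ ≤ edgeDensityR G X := by
  have hk : (0 : ℝ) < #X := by exact_mod_cast hX.card_pos
  have hm : (0 : ℝ) < #Xᶜ := by exact_mod_cast hXc.card_pos
  calc (n : ℝ) / #Xᶜ = n * #X / (#X * #Xᶜ) := by field_simp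
    _ ≤ edgeDensityR G X := by
      rw [edgeDensityR]
      gcongr
      exact_mod_cast card_le_crossEdgeCard G hcross

end crossEdgeCard

namespace IsLapEigSeq

variable {n : ℕ} {G : SimpleGraph (Fin n)} [DecidableRel G.Adj] {μ : Fin n → ℝ}

lemma exists_eigenvalues_eq (hμ : IsLapEigSeq G μ) (j : Fin n) :
    ∃ i, (G.isHermitian_lapMatrix ℝ).eigenvalues i = μ j :=
  (Set.ext_iff.mp ((G.isHermitian_lapMatrix ℝ).range_eigenvalues_of_charpoly_eq_prod hμ.2)
    (μ j)).mpr ⟨j, rfl⟩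

lemma exists_eq_eigenvalues (hμ : IsLapEigSeq G μ) (i : Fin n) :
    ∃ j, μ j = (G.isHermitian_lapMatrix ℝ).eigenvalues i :=
  (Set.ext_iff.mp ((G.isHermitian_lapMatrix ℝ).range_eigenvalues_of_charpoly_eq_prod hμ.2)
    _).mp ⟨i, rfl⟩

lemma nonneg (hμ : IsLapEigSeq G μ) (j : Fin n) : 0 ≤ μ j := by
  obtain ⟨i, hi⟩ := hμ.exists_eigenvalues_eq j
  exact hi ▸ (G.posSemidef_lapMatrix ℝ).eigenvalues_nonneg i

lemma dotProduct_lapMatrix_mulVec_le (hμ : IsLapEigSeq G μ) (h : 0 < n) (x : Fin n → ℝ) :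
    x ⬝ᵥ G.lapMatrix ℝ *ᵥ x ≤ μ ⟨0, h⟩ * (x ⬝ᵥ x) := by
  refine (G.isHermitian_lapMatrix ℝ).dotProduct_mulVec_le_of_eigenvalues_le (fun i => ?_) x
  obtain ⟨j, hj⟩ := hμ.exists_eq_eigenvalues i
  exact hj ▸ hμ.1 _ _ (Fin.le_def.mpr (Nat.zero_le _))

/-- The zero eigenvalue is simple and `μ ⟨n - 1, _⟩ = 0` is the smallest term of `μ`, so every
other eigenvalue occurs among `μ 0, …, μ ⟨n - 2, _⟩`. -/
lemma exists_eigenvalues_eq_zero_and_le (hμ : IsLapEigSeq G μ) (hG : G.Connected)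
    (h : 2 ≤ n) :
    ∃ i₀, (G.isHermitian_lapMatrix ℝ).eigenvalues i₀ = 0 ∧
      ∀ i ≠ i₀, μ ⟨n - 2, by omega⟩ ≤ (G.isHermitian_lapMatrix ℝ).eigenvalues i := by
  obtain ⟨i₀, hi₀⟩ := card_eq_one.mp hG.card_filter_lapMatrix_eigenvalues_eq_zero
  have eq_zero_iff (i : Fin n) : (G.isHermitian_lapMatrix ℝ).eigenvalues i = 0 ↔ i = i₀ := by
    simpa using Finset.ext_iff.mp hi₀ i
  have hlast : μ ⟨n - 1, by omega⟩ = 0 := by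
    obtain ⟨j₀, hj₀⟩ := hμ.exists_eq_eigenvalues i₀
    rw [(eq_zero_iff i₀).2 rfl] at hj₀
    exact le_antisymm (hj₀ ▸ hμ.1 _ _ (Fin.le_def.mpr (by simp only; omega))) (hμ.nonneg _)
  refine ⟨i₀, (eq_zero_iff i₀).2 rfl, fun i hi => ?_⟩
  obtain ⟨j, hj⟩ := hμ.exists_eq_eigenvalues i
  have hj_ne : (j : ℕ) ≠ n - 1 := by
    intro hj_last
    rw [show j = ⟨n - 1, by omega⟩ from Fin.ext hj_last, hlast, eq_comm, eq_zero_iff] at hj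
    exact hi hj
  exact hj ▸ hμ.1 _ _ (Fin.le_def.mpr (by simp only; omega))

lemma le_dotProduct_lapMatrix_mulVec (hμ : IsLapEigSeq G μ) (hG : G.Connected) (h : 2 ≤ n)
    {x : Fin n → ℝ} (hx : ∑ v, x v = 0) :
    μ ⟨n - 2, by omega⟩ * (x ⬝ᵥ x) ≤ x ⬝ᵥ G.lapMatrix ℝ *ᵥ x := by
  obtain ⟨i₀, hi₀, hle⟩ := hμ.exists_eigenvalues_eq_zero_and_le hG h
  refine (G.isHermitian_lapMatrix ℝ).le_dotProduct_mulVec_of_le_eigenvalues hle ?_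
  have hconst := hG.eigenvectorBasis_lapMatrix_apply_eq hi₀
  rw [dotProduct, ← mul_zero ((G.isHermitian_lapMatrix ℝ).eigenvectorBasis i₀ i₀), ← hx,
    mul_sum]
  exact sum_congr rfl fun u _ => by rw [hconst u i₀]

lemma edgeDensityR_le (hμ : IsLapEigSeq G μ) (h : 0 < n) {X : Finset (Fin n)}
    (hX : X.Nonempty) (hXc : Xᶜ.Nonempty) : edgeDensityR G X ≤ μ ⟨0, h⟩ := by
  have hkm : (#X : ℝ) + #Xᶜ = n := by
    exact_mod_cast (card_add_card_compl X).trans (Fintype.card_fin n)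
  have hk : (0 : ℝ) < #X := by exact_mod_cast hX.card_pos
  have hm : (0 : ℝ) < #Xᶜ := by exact_mod_cast hXc.card_pos
  set k : ℝ := (#X : ℝ)
  set m : ℝ := (#Xᶜ : ℝ)
  have hrayleigh := hμ.dotProduct_lapMatrix_mulVec_le h (fun v => if v ∈ X then m else -k)
  rw [dotProduct_lapMatrix_mulVec_ite_mem, dotProduct_self_ite_mem] at hrayleigh
  rw [edgeDensityR, div_le_iff₀ (by positivity)]
  refine le_of_mul_le_mul_left ?_ (show (0 : ℝ) < n by exact_mod_cast h)
  calc (n : ℝ) * (n * crossEdgeCard G X) = (m - -k) ^ 2 * crossEdgeCard G X := by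
        rw [← hkm]; ring
    _ ≤ μ ⟨0, h⟩ * (k * m ^ 2 + m * (-k) ^ 2) := hrayleigh
    _ = n * (μ ⟨0, h⟩ * (k * m)) := by rw [← hkm]; ring

lemma le_one_of_degree_eq_one (hμ : IsLapEigSeq G μ) (hG : G.Connected) (h : 3 ≤ n)
    {v : Fin n} (hv : G.degree v = 1) : μ ⟨n - 2, by omega⟩ ≤ 1 := by
  obtain ⟨u, hvu, -⟩ := SimpleGraph.degree_eq_one_iff_existsUnique_adj.mp hv
  set y : Fin n → ℝ := ((n : ℝ) - 1) • Pi.single v 1 + (1 : ℝ) • Pi.single u 1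
  set x : Fin n → ℝ := y - fun _ => 1
  have hsum : ∑ w, x w = 0 := by
    simp [x, y, sum_add_distrib, sum_sub_distrib, ← mul_sum]
  have hnorm : x ⬝ᵥ x = ((n : ℝ) - 1) * (n - 2) := by
    simp only [x, y, one_smul, dotProduct_sub, dotProduct_add, dotProduct_smul, dotProduct_single,
      Pi.sub_apply, Pi.add_apply, Pi.smul_apply, Pi.single_eq_same, smul_eq_mul, mul_one, ne_eq,
      hvu.ne, not_false_eq_true, Pi.single_eq_of_ne, add_zero, Pi.single_eq_of_ne', mul_zero,
      zero_add, sub_self, sub_dotProduct, add_dotProduct, smul_dotProduct, single_dotProduct,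
      sub_add_cancel]
    rw [show ((fun _ => (1 : ℝ)) ⬝ᵥ fun _ => 1) = n by simp [dotProduct]]
    ring
  have hquad := G.dotProduct_lapMatrix_mulVec_sub_const y 1
  rw [G.dotProduct_lapMatrix_mulVec_smul_single_add hvu, hv, Nat.cast_one] at hquad
  have hdeg : (G.degree u : ℝ) ≤ n - 1 := by
    have := G.degree_lt_card_verts u
    rw [Fintype.card_fin] at this
    rw [le_sub_iff_add_le]
    exact_mod_cast this
  have hpos : (0 : ℝ) < ((n : ℝ) - 1) * (n - 2) := by
    have : (3 : ℝ) ≤ n := by exact_mod_cast h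
    nlinarith
  have hrayleigh := hμ.le_dotProduct_lapMatrix_mulVec hG (by omega) hsum
  rw [hnorm, hquad] at hrayleigh
  refine le_of_mul_le_mul_right ?_ hpos
  linarith

end IsLapEigSeq

/-- if the set `T` of pendant vertices of a connected graph `G` is a
nonempty proper subset of `V(G)` of cardinality `n₁`, then `S_L(G) ≥ n₁/(n - n₁)`. -/
theorem laplacianSpread_ge_pendant_ratio
    {n : ℕ} (hn : 2 ≤ n) (G : SimpleGraph (Fin n)) [DecidableRel G.Adj]
    (hG : G.Connected)
    (μ : Fin n → ℝ) (hμ : IsLapEigSeq G μ)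
    (n₁ : ℕ)
    (hT : (univ.filter (fun v => G.degree v = 1)).Nonempty)
    (hTp : univ.filter (fun v => G.degree v = 1) ≠ univ)
    (hn₁ : (univ.filter (fun v => G.degree v = 1)).card = n₁) :
    (n₁ : ℝ) / ((n : ℝ) - (n₁ : ℝ)) ≤ μ ⟨0, by omega⟩ - μ ⟨n - 2, by omega⟩ := by
  set T := univ.filter (fun v => G.degree v = 1)
  obtain ⟨w, hw⟩ : ∃ w, G.degree w ≠ 1 := by simpa [T, eq_univ_iff_forall] using hTp
  have hTc : Tᶜ.Nonempty := ⟨w, by simp [T, hw]⟩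
  have hcross : ∀ v ∈ T, ∃ u ∉ T, G.Adj v u := by
    intro v hv
    replace hv := (mem_filter.mp hv).2
    obtain ⟨u, hvu, -⟩ := SimpleGraph.degree_eq_one_iff_existsUnique_adj.mp hv
    exact ⟨u, fun hu => hG.degree_ne_one_of_adj hw hv hvu (mem_filter.mp hu).2, hvu⟩
  obtain ⟨v, hv⟩ := id hT
  obtain ⟨u, hu, hvu⟩ := hcross v hv
  have hn3 : 3 ≤ n := by
    have hu' : G.degree u ≠ 1 := by simpa [T] using hu
    simpa using SimpleGraph.three_le_card_of_adj_of_degree_ne_one hvu hu'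
  have hcard : (#Tᶜ : ℝ) = n - n₁ := by
    rw [← hn₁, eq_sub_iff_add_eq]
    exact_mod_cast (card_compl_add_card T).trans (Fintype.card_fin n)
  have hpos : (0 : ℝ) < n - n₁ := hcard ▸ (by exact_mod_cast hTc.card_pos)
  have hρ := (div_card_compl_le_edgeDensityR G hT hTc hcross).trans
    (hμ.edgeDensityR_le (by omega) hT hTc)
  have hfiedler := hμ.le_one_of_degree_eq_one hG hn3 (mem_filter.mp hv).2
  rw [hcard] at hρ
  calc (n₁ : ℝ) / (n - n₁) = n / (n - n₁) - 1 := by field_simp; ring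
    _ ≤ μ ⟨0, by omega⟩ - μ ⟨n - 2, by omega⟩ := sub_le_sub hρ hfiedler
end
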